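/- In the A∞-category 𝒜 of the 4-punctured sphere, μ₄(u,u,u,u) = 1 and μ₄(v,v,v,v) = 1 (the identity morphisms of the corresponding objects), and μ_k(u,…,u) = 0 = μ_k(v,…,v) for all k ≠ 4 with k ≥ 2. -/

import Mathlib

/-!
**Statement 14.** In the A∞-category `𝒜` of the 4-punctured sphere,
`μ₄(u,u,u,u) = 1` and `μ₄(v,v,v,v) = 1` (the identity morphisms of the corresponding
objects), and `μ_k(u,…,u) = 0 = μ_k(v,…,v)` for all `k ≠ 4` with `k ≥ 2`.

The category `𝒜` is encoded as in statement 13 (basis morphisms `B 4`, binary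
composition `mu2`, and `IsMu 4 mu` expressing that `mu` is the family of
A∞-operations given by the recursive definition).  Here `u` stands for the sequence
of composable morphisms `u_{i,i+1}` and likewise for `v`.
-/

namespace FukayaSphere

inductive B (n : ℕ) : Type
  | endo : ZMod n → ℤ → B n
  | uu : ZMod n → ℕ → B n
  | vv : ZMod n → ℕ → B n
deriving DecidableEq

variable {n : ℕ}

def srcB : B n → ZMod n
  | .endo i _ => i
  | .uu i _ => i
  | .vv i _ => i

def tgtB : B n → ZMod n
  | .endo i _ => i
  | .uu i _ => i + 1
  | .vv i _ => i - 1

/-- binary composition, in diagrammatic order; `none` encodes the zero morphism. -/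
def mu2 : B n → B n → Option (B n)
  | .endo i a, .endo j b => if j = i ∧ 0 ≤ a * b then some (.endo i (a + b)) else none
  | .endo i a, .uu j k => if j = i ∧ a ≤ 0 then some (.uu i (k + a.natAbs)) else none
  | .endo i a, .vv j k => if j = i ∧ 0 ≤ a then some (.vv i (k + a.natAbs)) else none
  | .uu i k, .endo j b => if j = i + 1 ∧ 0 ≤ b then some (.uu i (k + b.natAbs)) else none
  | .uu i k, .vv j l => if j = i + 1 then some (.endo i (-(k + l + 1 : ℤ))) else none
  | .uu _ _, .uu _ _ => none
  | .vv i k, .endo j b => if j = i - 1 ∧ b ≤ 0 then some (.vv i (k + b.natAbs)) else none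
  | .vv i k, .uu j l => if j = i - 1 then some (.endo i ((k : ℤ) + l + 1)) else none
  | .vv _ _, .vv _ _ => none

abbrev H (n : ℕ) := B n →₀ ZMod 2

noncomputable def toH : Option (B n) → H n
  | some b => Finsupp.single b 1
  | none => 0

def uLoop (i : ZMod n) (k : ℕ) : List (B n) :=
  List.ofFn fun t : Fin k => B.uu (i + ((t : ℕ) : ZMod n)) 0

def vLoop (i : ZMod n) (k : ℕ) : List (B n) :=
  List.ofFn fun t : Fin k => B.vv (i - ((t : ℕ) : ZMod n)) 0

structure IsMu (n : ℕ) (mu : List (B n) → Option (B n)) : Prop where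
  binary : ∀ a b : B n, mu [a, b] = mu2 a b
  expand_u : ∀ (pre post : List (B n)) (a b ca cb : B n) (i : ZMod n),
      mu2 a (.uu i 0) = some ca → mu2 (.uu (i - 1) 0) b = some cb →
      mu (pre ++ [ca] ++ uLoop (i + 1) (n - 2) ++ [cb] ++ post)
        = mu (pre ++ [a, b] ++ post)
  expand_v : ∀ (pre post : List (B n)) (a b ca cb : B n) (i : ZMod n),
      mu2 a (.vv i 0) = some ca → mu2 (.vv (i + 1) 0) b = some cb →
      mu (pre ++ [ca] ++ vLoop (i - 1) (n - 2) ++ [cb] ++ post)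
        = mu (pre ++ [a, b] ++ post)
  vanish : ∀ l : List (B n), l.length ≠ 2 → mu l ≠ none →
      ∃ (pre post : List (B n)) (a b ca cb : B n) (i : ZMod n),
        ((mu2 a (.uu i 0) = some ca ∧ mu2 (.uu (i - 1) 0) b = some cb ∧
            l = pre ++ [ca] ++ uLoop (i + 1) (n - 2) ++ [cb] ++ post) ∨
         (mu2 a (.vv i 0) = some ca ∧ mu2 (.vv (i + 1) 0) b = some cb ∧
            l = pre ++ [ca] ++ vLoop (i - 1) (n - 2) ++ [cb] ++ post)) ∧
        mu l = mu (pre ++ [a, b] ++ post)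

end FukayaSphere

/-!
Weight the basis morphisms by `2|a|` for `x^a`, `y^a` and by `2k + 1` for `u`, `v` carrying a
power `k`; then `μ₂` is additive. Each use of the recursive rule inserts `n - 2` letters and
raises the total weight by `n`, so a nonzero `μ(l) = m` reached after `t` insertions has
`|l| = 2 + t (n - 2)` and `weight l = weight m + t n`. A string of `k` bare `u`'s or `v`'s has
weight `k`, which forces `weight m + 2t = 2`: hence `t ≤ 1` and `k ∈ {2, n}`, and `μ₂(u, u) = 0`.
Conversely, `μ_n(u, …, u)` is the expansion of `μ₂(1, 1) = 1`.
-/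

namespace FukayaSphere

variable {n : ℕ}

def B.weight : B n → ℕ
  | .endo _ a => 2 * a.natAbs
  | .uu _ k => 2 * k + 1
  | .vv _ k => 2 * k + 1

@[simp]
theorem B.weight_uu (i : ZMod n) (k : ℕ) : (B.uu i k).weight = 2 * k + 1 := rfl

@[simp]
theorem B.weight_vv (i : ZMod n) (k : ℕ) : (B.vv i k).weight = 2 * k + 1 := rfl

theorem B.weight_eq_add_of_mu2_eq_some {a b c : B n} (h : mu2 a b = some c) :
    c.weight = a.weight + b.weight := by
  cases a <;> cases b <;> simp only [mu2] at h <;> (try cases h) <;> split_ifs at h with hc <;>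
    cases h <;> simp only [B.weight] <;> try omega
  rcases mul_nonneg_iff.mp hc.2 with ⟨h1, h2⟩ | ⟨h1, h2⟩ <;> omega

@[simp]
theorem length_uLoop (i : ZMod n) (k : ℕ) : (uLoop i k).length = k := by
  simp [uLoop]

@[simp]
theorem length_vLoop (i : ZMod n) (k : ℕ) : (vLoop i k).length = k := by
  simp [vLoop]

@[simp]
theorem sum_map_weight_uLoop (i : ZMod n) (k : ℕ) : ((uLoop i k).map B.weight).sum = k := by
  simp [uLoop, List.map_ofFn, Function.comp_def, B.weight]

@[simp]
theorem sum_map_weight_vLoop (i : ZMod n) (k : ℕ) : ((vLoop i k).map B.weight).sum = k := by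
  simp [vLoop, List.map_ofFn, Function.comp_def, B.weight]

theorem uLoop_two (i : ZMod n) : uLoop i 2 = [B.uu i 0, B.uu (i + 1) 0] := by
  simp [uLoop, List.ofFn_succ]

theorem vLoop_two (i : ZMod n) : vLoop i 2 = [B.vv i 0, B.vv (i - 1) 0] := by
  simp [vLoop, List.ofFn_succ]

theorem uLoop_add_two (i : ZMod n) (k : ℕ) :
    uLoop i (k + 2) = [B.uu i 0] ++ uLoop (i + 1) k ++ [B.uu (i + ((k + 1 : ℕ) : ZMod n)) 0] := by
  rw [uLoop, List.ofFn_succ', List.ofFn_succ]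
  simp [uLoop, add_assoc, add_comm (1 : ZMod n)]

theorem vLoop_add_two (i : ZMod n) (k : ℕ) :
    vLoop i (k + 2) = [B.vv i 0] ++ vLoop (i - 1) k ++ [B.vv (i - ((k + 1 : ℕ) : ZMod n)) 0] := by
  rw [vLoop, List.ofFn_succ', List.ofFn_succ]
  simp [vLoop, sub_sub, add_comm (1 : ZMod n)]

namespace IsMu

variable {mu : List (B n) → Option (B n)}

theorem exists_contraction (hmu : IsMu n mu) (hn : 2 ≤ n) {l : List (B n)}
    (hl : l.length ≠ 2) (h : mu l ≠ none) :
    ∃ l' : List (B n), mu l = mu l' ∧ l.length = l'.length + (n - 2) ∧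
      (l.map B.weight).sum = (l'.map B.weight).sum + n := by
  obtain ⟨pre, post, a, b, ca, cb, i, hexp, hmu_eq⟩ := hmu.vanish l hl h
  refine ⟨pre ++ [a, b] ++ post, hmu_eq, ?_⟩
  rcases hexp with ⟨ha, hb, rfl⟩ | ⟨ha, hb, rfl⟩ <;>
  · have hwa := B.weight_eq_add_of_mu2_eq_some ha
    have hwb := B.weight_eq_add_of_mu2_eq_some hb
    simp only [B.weight_uu, B.weight_vv] at hwa hwb
    simp only [List.length_append, List.length_cons, List.length_nil, length_uLoop,
      length_vLoop, List.map_append, List.map_cons, List.map_nil, List.sum_append,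
      List.sum_cons, List.sum_nil, sum_map_weight_uLoop, sum_map_weight_vLoop]
    omega

theorem exists_length_eq_of_eq_some (hmu : IsMu n mu) (hn : 2 ≤ n) (l : List (B n))
    {m : B n} (h : mu l = some m) :
    ∃ t : ℕ, l.length = 2 + t * (n - 2) ∧ (l.map B.weight).sum = m.weight + t * n := by
  by_cases hl : l.length = 2
  · obtain ⟨a, b, rfl⟩ := List.length_eq_two.mp hl
    rw [hmu.binary] at h
    exact ⟨0, by simp, by simp [B.weight_eq_add_of_mu2_eq_some h]⟩
  · obtain ⟨l', hmu_eq, hlen, hweight⟩ := hmu.exists_contraction hn hl (by simp [h])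
    obtain ⟨t, hlen', hweight'⟩ := hmu.exists_length_eq_of_eq_some hn l' (hmu_eq ▸ h)
    exact ⟨t + 1, by rw [hlen, hlen']; ring, by rw [hweight, hweight']; ring⟩
termination_by (l.map B.weight).sum
decreasing_by omega

theorem length_eq_two_or_eq_of_sum_map_weight_eq_length (hmu : IsMu n mu) (hn : 2 ≤ n)
    {l : List (B n)} (hl : (l.map B.weight).sum = l.length) (h : mu l ≠ none) :
    l.length = 2 ∨ l.length = n := by
  obtain ⟨m, hm⟩ := Option.ne_none_iff_exists'.mp h
  obtain ⟨t, hlen, hweight⟩ := hmu.exists_length_eq_of_eq_some hn l hm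
  obtain ⟨n, rfl⟩ := Nat.exists_eq_add_of_le' hn
  rw [Nat.add_sub_cancel] at hlen
  have ht : m.weight + 2 * t = 2 := by nlinarith
  obtain rfl | rfl : t = 0 ∨ t = 1 := by omega
  · exact Or.inl (by simpa using hlen)
  · exact Or.inr (by omega)

theorem uLoop_eq_none (hmu : IsMu n mu) (hn : 2 ≤ n) (i : ZMod n) {k : ℕ} (hk : k ≠ n) :
    mu (uLoop i k) = none := by
  by_contra h
  rcases hmu.length_eq_two_or_eq_of_sum_map_weight_eq_length hn (by simp) h with h2 | hkn
  · simp only [length_uLoop] at h2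
    subst h2
    simp [uLoop_two, hmu.binary, mu2] at h
  · exact hk (by simpa using hkn)

theorem vLoop_eq_none (hmu : IsMu n mu) (hn : 2 ≤ n) (i : ZMod n) {k : ℕ} (hk : k ≠ n) :
    mu (vLoop i k) = none := by
  by_contra h
  rcases hmu.length_eq_two_or_eq_of_sum_map_weight_eq_length hn (by simp) h with h2 | hkn
  · simp only [length_vLoop] at h2
    subst h2
    simp [vLoop_two, hmu.binary, mu2] at h
  · exact hk (by simpa using hkn)

theorem uLoop_self (hmu : IsMu n mu) (hn : 2 ≤ n) (i : ZMod n) :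
    mu (uLoop i n) = some (B.endo i 0) := by
  obtain ⟨k, rfl⟩ := Nat.exists_eq_add_of_le' hn
  have hlast : i + ((k + 1 : ℕ) : ZMod (k + 2)) = i - 1 := by
    have hzero : ((k + 2 : ℕ) : ZMod (k + 2)) = 0 := ZMod.natCast_self _
    push_cast at hzero ⊢
    linear_combination hzero
  have hexpand := hmu.expand_u [] [] (B.endo i 0) (B.endo i 0) (B.uu i 0) (B.uu (i - 1) 0) i
    (by simp [mu2]) (by simp [mu2])
  rw [uLoop_add_two, hlast]
  simpa [hmu.binary, mu2] using hexpand

theorem vLoop_self (hmu : IsMu n mu) (hn : 2 ≤ n) (i : ZMod n) :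
    mu (vLoop i n) = some (B.endo i 0) := by
  obtain ⟨k, rfl⟩ := Nat.exists_eq_add_of_le' hn
  have hlast : i - ((k + 1 : ℕ) : ZMod (k + 2)) = i + 1 := by
    have hzero : ((k + 2 : ℕ) : ZMod (k + 2)) = 0 := ZMod.natCast_self _
    push_cast at hzero ⊢
    linear_combination -hzero
  have hexpand := hmu.expand_v [] [] (B.endo i 0) (B.endo i 0) (B.vv i 0) (B.vv (i + 1) 0) i
    (by simp [mu2]) (by simp [mu2])
  rw [vLoop_add_two, hlast]
  simpa [hmu.binary, mu2] using hexpand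

end IsMu

end FukayaSphere

open FukayaSphere in
theorem stmt14 (mu : List (B 4) → Option (B 4)) (hmu : IsMu 4 mu) :
    -- μ₄(u,u,u,u) = 1 and μ₄(v,v,v,v) = 1:
    (∀ i : ZMod 4,
      mu [B.uu i 0, B.uu (i + 1) 0, B.uu (i + 2) 0, B.uu (i + 3) 0]
        = some (B.endo i 0) ∧
      mu [B.vv i 0, B.vv (i - 1) 0, B.vv (i - 2) 0, B.vv (i - 3) 0]
        = some (B.endo i 0)) ∧
    -- μ_k(u,…,u) = 0 = μ_k(v,…,v) for all k ≥ 2 with k ≠ 4: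
    (∀ k : ℕ, 2 ≤ k → k ≠ 4 → ∀ i : ZMod 4,
      mu (uLoop i k) = none ∧ mu (vLoop i k) = none) := by
  have h4 : 2 ≤ 4 := by norm_num
  refine ⟨fun i => ⟨?_, ?_⟩, fun k _ hk i => ⟨hmu.uLoop_eq_none h4 i hk, hmu.vLoop_eq_none h4 i hk⟩⟩
  · simpa [uLoop, List.ofFn_succ, one_add_one_eq_two, two_add_one_eq_three]
      using hmu.uLoop_self h4 i
  · simpa [vLoop, List.ofFn_succ, one_add_one_eq_two, two_add_one_eq_three]
      using hmu.vLoop_self h4 i
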